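/- For A ∈ B(H) and B ∈ B(K), the equality w(A ⊗ B) = (1/2)‖A‖‖B‖ holds if and only if for every real θ, ‖e^{iθ} A ⊗ B + e^{−iθ} A* ⊗ B*‖ = ‖e^{iθ} A ⊗ B − e^{−iθ} A* ⊗ B*‖ = ‖A‖‖B‖. -/

import Mathlib

open ContinuousLinearMap

/-- Numerical radius: `w(T) = sup { |⟨Tx,x⟩| : ‖x‖ = 1 }`. -/
noncomputable def nrad {E : Type*} [NormedAddCommGroup E] [InnerProductSpace ℂ E]
    (T : E →L[ℂ] E) : ℝ :=
  ⨆ x : {x : E // ‖x‖ = 1}, ‖(inner ℂ (T x.1) x.1 : ℂ)‖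

/-- `tmul` realizes `E` as the Hilbert tensor product of `H` and `K`:
the inner product is multiplicative on elementary tensors and elementary
tensors span a dense subspace. -/
structure IsHilbertTensorMap
    {H K E : Type*} [NormedAddCommGroup H] [InnerProductSpace ℂ H]
    [NormedAddCommGroup K] [InnerProductSpace ℂ K]
    [NormedAddCommGroup E] [InnerProductSpace ℂ E]
    (tmul : H →ₗ[ℂ] K →ₗ[ℂ] E) : Prop where
  inner_tmul : ∀ (x z : H) (y w : K),
    (inner ℂ (tmul x y) (tmul z w) : ℂ) = (inner ℂ x z : ℂ) * (inner ℂ y w : ℂ)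
  dense_span :
    Dense ((Submodule.span ℂ (Set.range fun p : H × K => tmul p.1 p.2) : Submodule ℂ E) : Set E)

/-- `T` is the tensor product operator `A ⊗ B`, i.e. `T (x ⊗ y) = A x ⊗ B y`. -/
def IsTensorOp {H K E : Type*} [NormedAddCommGroup H] [InnerProductSpace ℂ H]
    [NormedAddCommGroup K] [InnerProductSpace ℂ K]
    [NormedAddCommGroup E] [InnerProductSpace ℂ E]
    (tmul : H →ₗ[ℂ] K →ₗ[ℂ] E)
    (A : H →L[ℂ] H) (B : K →L[ℂ] K) (T : E →L[ℂ] E) : Prop :=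
  ∀ (x : H) (y : K), T (tmul x y) = tmul (A x) (B y)

/-
For any operator `R`, both `R + R*` and `i (R - R*)` are self-adjoint, and the norm of a
self-adjoint operator equals its numerical radius; hence `‖R ± R*‖ ≤ 2 w(R)`, while the triangle
inequality gives `2 ‖R‖ ≤ ‖R + R*‖ + ‖R - R*‖`. Applied to `R = e^{iθ} T`, which has the same
norm and numerical radius as `T`, this yields the forward implication once `‖A‖ ‖B‖ ≤ ‖A ⊗ B‖`,
which holds because the norm is multiplicative on elementary tensors. Conversely, taking `θ` to
be the argument of `⟪T x, x⟫` makes `2 |⟪T x, x⟫| = ⟪(R + R*) x, x⟫ ≤ ‖R + R*‖`, so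
`2 w(T) ≤ ‖A‖ ‖B‖`, and `θ = 0` gives `‖A‖ ‖B‖ = ‖T + T*‖ ≤ 2 w(T)`.
-/

section NumericalRadius

variable {E : Type*} [NormedAddCommGroup E] [InnerProductSpace ℂ E]

lemma nrad_nonneg (T : E →L[ℂ] E) : 0 ≤ nrad T :=
  Real.iSup_nonneg fun _ => norm_nonneg _

lemma nrad_le {T : E →L[ℂ] E} {c : ℝ} (hc : 0 ≤ c)
    (h : ∀ x : E, ‖x‖ = 1 → ‖(inner ℂ (T x) x : ℂ)‖ ≤ c) : nrad T ≤ c :=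
  Real.iSup_le (fun x => h x.1 x.2) hc

lemma norm_inner_apply_self_le (T : E →L[ℂ] E) (x : E) :
    ‖(inner ℂ (T x) x : ℂ)‖ ≤ ‖T‖ * ‖x‖ ^ 2 :=
  calc ‖(inner ℂ (T x) x : ℂ)‖ ≤ ‖T x‖ * ‖x‖ := norm_inner_le_norm _ _
    _ ≤ ‖T‖ * ‖x‖ * ‖x‖ := by gcongr; exact T.le_opNorm x
    _ = ‖T‖ * ‖x‖ ^ 2 := by ring

lemma norm_inner_le_nrad (T : E →L[ℂ] E) {x : E} (hx : ‖x‖ = 1) :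
    ‖(inner ℂ (T x) x : ℂ)‖ ≤ nrad T := by
  refine le_ciSup (f := fun x : {x : E // ‖x‖ = 1} => ‖(inner ℂ (T x.1) x.1 : ℂ)‖)
    ⟨‖T‖, ?_⟩ ⟨x, hx⟩
  rintro r ⟨y, rfl⟩
  simpa [y.2] using norm_inner_apply_self_le T y.1

lemma norm_inner_le_nrad_mul_sq (T : E →L[ℂ] E) (x : E) :
    ‖(inner ℂ (T x) x : ℂ)‖ ≤ nrad T * ‖x‖ ^ 2 := by
  rcases eq_or_ne x 0 with rfl | hx
  · simp
  have hunit := norm_inner_le_nrad T (norm_smul_inv_norm (𝕜 := ℂ) hx)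
  rw [map_smul, inner_smul_left, inner_smul_right, norm_mul, norm_mul, RCLike.norm_conj,
    ← mul_assoc, ← sq, norm_inv, RCLike.norm_ofReal, abs_norm, inv_pow,
    inv_mul_le_iff₀ (by positivity)] at hunit
  linarith

lemma nrad_smul (c : ℂ) (T : E →L[ℂ] E) : nrad (c • T) = ‖c‖ * nrad T := by
  simp only [nrad, smul_apply, inner_smul_left, norm_mul, RCLike.norm_conj]
  exact (Real.mul_iSup_of_nonneg (norm_nonneg c) _).symm

lemma LinearMap.IsSymmetric.norm_le_nrad {S : E →L[ℂ] E} (hS : (S : E →ₗ[ℂ] E).IsSymmetric) :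
    ‖S‖ ≤ nrad S := by
  rw [S.norm_eq_iSup_rayleighQuotient hS]
  refine ciSup_le fun x => ?_
  rw [ContinuousLinearMap.rayleighQuotient, abs_div, abs_sq]
  refine div_le_of_le_mul₀ (sq_nonneg _) (nrad_nonneg S) ?_
  exact (RCLike.abs_re_le_norm _).trans (norm_inner_le_nrad_mul_sq S x)

end NumericalRadius

lemma Complex.conj_exp_ofReal_mul_I (θ : ℝ) :
    (starRingEnd ℂ) (Complex.exp (θ * Complex.I)) = Complex.exp (-(θ * Complex.I)) := by
  rw [← Complex.exp_conj, map_mul, Complex.conj_ofReal, Complex.conj_I, mul_neg]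

lemma Complex.conj_exp_arg_mul_I_mul (z : ℂ) :
    (starRingEnd ℂ) (Complex.exp (z.arg * Complex.I)) * z = ‖z‖ := by
  rw [Complex.conj_exp_ofReal_mul_I]
  calc Complex.exp (-(z.arg * Complex.I)) * z
      = Complex.exp (-(z.arg * Complex.I)) * (‖z‖ * Complex.exp (z.arg * Complex.I)) := by
        rw [z.norm_mul_exp_arg_mul_I]
    _ = ‖z‖ := by rw [mul_left_comm, ← Complex.exp_add, neg_add_cancel, Complex.exp_zero, mul_one]

section HermitianParts

variable {E : Type*} [NormedAddCommGroup E] [InnerProductSpace ℂ E] [CompleteSpace E]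

lemma star_exp_ofReal_mul_I_smul (θ : ℝ) (T : E →L[ℂ] E) :
    star (Complex.exp (θ * Complex.I) • T) =
      Complex.exp (-(θ * Complex.I)) • ContinuousLinearMap.adjoint T := by
  rw [star_smul, star_eq_adjoint, Complex.star_def, Complex.conj_exp_ofReal_mul_I]

lemma inner_add_star_apply_self (R : E →L[ℂ] E) (x : E) :
    (inner ℂ ((R + star R) x) x : ℂ) = (2 * (inner ℂ (R x) x : ℂ).re : ℝ) := by
  rw [add_apply, inner_add_left, star_eq_adjoint, adjoint_inner_left, ← inner_conj_symm x (R x),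
    Complex.add_conj]

lemma norm_add_star_le_two_mul_nrad (R : E →L[ℂ] E) : ‖R + star R‖ ≤ 2 * nrad R := by
  refine (IsSelfAdjoint.add_star_self R).isSymmetric.norm_le_nrad.trans <|
    nrad_le (mul_nonneg zero_le_two (nrad_nonneg R)) fun x hx => ?_
  rw [inner_add_star_apply_self, Complex.norm_real, Real.norm_eq_abs, abs_mul, abs_two]
  gcongr
  exact (Complex.abs_re_le_norm _).trans (norm_inner_le_nrad R hx)

lemma norm_sub_star_le_two_mul_nrad (R : E →L[ℂ] E) : ‖R - star R‖ ≤ 2 * nrad R := by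
  have hrot : Complex.I • (R - star R) = Complex.I • R + star (Complex.I • R) := by
    rw [star_smul, Complex.star_def, Complex.conj_I, neg_smul, smul_sub, sub_eq_add_neg]
  calc ‖R - star R‖ = ‖Complex.I • (R - star R)‖ := by rw [norm_smul, Complex.norm_I, one_mul]
    _ ≤ 2 * nrad (Complex.I • R) := hrot ▸ norm_add_star_le_two_mul_nrad _
    _ = 2 * nrad R := by rw [nrad_smul, Complex.norm_I, one_mul]

lemma two_mul_norm_le_norm_add_star_add_norm_sub_star (R : E →L[ℂ] E) :
    2 * ‖R‖ ≤ ‖R + star R‖ + ‖R - star R‖ :=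
  calc 2 * ‖R‖ = ‖(R + star R) + (R - star R)‖ := by
        rw [add_add_sub_cancel, ← two_smul ℂ R, norm_smul, RCLike.norm_two]
    _ ≤ ‖R + star R‖ + ‖R - star R‖ := norm_add_le _ _

lemma two_mul_nrad_le_of_forall_norm_add_star_le (T : E →L[ℂ] E) {c : ℝ}
    (h : ∀ θ : ℝ, ‖Complex.exp (θ * Complex.I) • T + star (Complex.exp (θ * Complex.I) • T)‖ ≤ c) :
    2 * nrad T ≤ c := by
  have hc : 0 ≤ c := (norm_nonneg _).trans (h 0)
  suffices nrad T ≤ c / 2 by linarith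
  refine nrad_le (by positivity) fun x hx => ?_
  set t : ℂ := inner ℂ (T x) x
  set R := Complex.exp (t.arg * Complex.I) • T
  -- rotating `T` by the phase of `⟪T x, x⟫` makes that inner product real and nonnegative
  have hRx : (inner ℂ (R x) x : ℂ) = ‖t‖ := by
    rw [smul_apply, inner_smul_left, Complex.conj_exp_arg_mul_I_mul]
  have key : 2 * ‖t‖ ≤ c := calc
    2 * ‖t‖ = ‖(inner ℂ ((R + star R) x) x : ℂ)‖ := by
      rw [inner_add_star_apply_self, hRx, Complex.ofReal_re, Complex.norm_real, Real.norm_eq_abs,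
        abs_of_nonneg (by positivity)]
    _ ≤ ‖R + star R‖ := by simpa [hx] using norm_inner_apply_self_le (R + star R) x
    _ ≤ c := h _
  linarith

theorem nrad_eq_half_iff_of_le_norm {T : E →L[ℂ] E} {M : ℝ} (hM : M ≤ ‖T‖) :
    nrad T = 1 / 2 * M ↔ ∀ θ : ℝ,
      ‖Complex.exp (θ * Complex.I) • T + star (Complex.exp (θ * Complex.I) • T)‖ = M ∧
      ‖Complex.exp (θ * Complex.I) • T - star (Complex.exp (θ * Complex.I) • T)‖ = M := by
  constructor
  · intro h θ
    set R := Complex.exp (θ * Complex.I) • T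
    have hnrad : nrad R = nrad T := by rw [nrad_smul, Complex.norm_exp_ofReal_mul_I, one_mul]
    have hnorm : ‖R‖ = ‖T‖ := by rw [norm_smul, Complex.norm_exp_ofReal_mul_I, one_mul]
    have hadd := norm_add_star_le_two_mul_nrad R
    have hsub := norm_sub_star_le_two_mul_nrad R
    have hsum := two_mul_norm_le_norm_add_star_add_norm_sub_star R
    constructor <;> linarith
  · intro h
    have hupper := two_mul_nrad_le_of_forall_norm_add_star_le T fun θ => (h θ).1.le
    have hlower := norm_add_star_le_two_mul_nrad T
    have hzero := (h 0).1
    rw [Complex.ofReal_zero, zero_mul, Complex.exp_zero, one_smul] at hzero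
    linarith

end HermitianParts

lemma ContinuousLinearMap.mul_opNorm_le_of_forall {𝕜 X Y : Type*} [NontriviallyNormedField 𝕜]
    [SeminormedAddCommGroup X] [NormedSpace 𝕜 X] [SeminormedAddCommGroup Y] [NormedSpace 𝕜 Y]
    (f : X →L[𝕜] Y) {a b : ℝ} (ha : 0 ≤ a) (hb : 0 ≤ b) (h : ∀ x, a * ‖f x‖ ≤ b * ‖x‖) :
    a * ‖f‖ ≤ b := by
  rcases ha.eq_or_lt with rfl | ha
  · simpa using hb
  rw [← le_div_iff₀' ha]
  refine f.opNorm_le_bound (by positivity) fun x => ?_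
  rw [div_mul_eq_mul_div, le_div_iff₀' ha]
  exact h x

section TensorProduct

variable {H K E : Type*} [NormedAddCommGroup H] [InnerProductSpace ℂ H]
  [NormedAddCommGroup K] [InnerProductSpace ℂ K] [NormedAddCommGroup E] [InnerProductSpace ℂ E]
  {tmul : H →ₗ[ℂ] K →ₗ[ℂ] E}

lemma IsHilbertTensorMap.norm_tmul (htmul : IsHilbertTensorMap tmul) (x : H) (y : K) :
    ‖tmul x y‖ = ‖x‖ * ‖y‖ := by
  have h := htmul.inner_tmul x x y y
  simp only [inner_self_eq_norm_sq_to_K, ← mul_pow] at h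
  norm_cast at h
  exact (sq_eq_sq₀ (norm_nonneg _) (by positivity)).1 h

lemma IsTensorOp.norm_mul_norm_le (htmul : IsHilbertTensorMap tmul)
    {A : H →L[ℂ] H} {B : K →L[ℂ] K} {T : E →L[ℂ] E} (hT : IsTensorOp tmul A B T) :
    ‖A‖ * ‖B‖ ≤ ‖T‖ := by
  have hprod (x : H) (y : K) : ‖B y‖ * ‖A x‖ ≤ ‖T‖ * ‖y‖ * ‖x‖ :=
    calc ‖B y‖ * ‖A x‖ = ‖T (tmul x y)‖ := by rw [hT, htmul.norm_tmul, mul_comm]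
      _ ≤ ‖T‖ * ‖tmul x y‖ := T.le_opNorm _
      _ = ‖T‖ * ‖y‖ * ‖x‖ := by rw [htmul.norm_tmul]; ring
  refine B.mul_opNorm_le_of_forall (norm_nonneg A) (norm_nonneg T) fun y => ?_
  rw [mul_comm]
  exact A.mul_opNorm_le_of_forall (norm_nonneg _) (by positivity) (hprod · y)

end TensorProduct

theorem stmt9_general
    {H K E : Type*} [NormedAddCommGroup H] [InnerProductSpace ℂ H]
    [NormedAddCommGroup K] [InnerProductSpace ℂ K]
    [NormedAddCommGroup E] [InnerProductSpace ℂ E] [CompleteSpace E]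
    (tmul : H →ₗ[ℂ] K →ₗ[ℂ] E) (htmul : IsHilbertTensorMap tmul)
    (A : H →L[ℂ] H) (B : K →L[ℂ] K) (T : E →L[ℂ] E)
    (hT : IsTensorOp tmul A B T) :
    nrad T = (1 / 2) * (‖A‖ * ‖B‖) ↔
      ∀ θ : ℝ,
        ‖Complex.exp (θ * Complex.I) • T +
            Complex.exp (-(θ * Complex.I)) • ContinuousLinearMap.adjoint T‖ = ‖A‖ * ‖B‖ ∧
        ‖Complex.exp (θ * Complex.I) • T -
            Complex.exp (-(θ * Complex.I)) • ContinuousLinearMap.adjoint T‖ = ‖A‖ * ‖B‖ := by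
  simpa only [star_exp_ofReal_mul_I_smul] using
    nrad_eq_half_iff_of_le_norm (hT.norm_mul_norm_le htmul)

theorem stmt9
    {H K E : Type*} [NormedAddCommGroup H] [InnerProductSpace ℂ H] [CompleteSpace H]
    [NormedAddCommGroup K] [InnerProductSpace ℂ K] [CompleteSpace K]
    [NormedAddCommGroup E] [InnerProductSpace ℂ E] [CompleteSpace E]
    (tmul : H →ₗ[ℂ] K →ₗ[ℂ] E) (htmul : IsHilbertTensorMap tmul)
    (A : H →L[ℂ] H) (B : K →L[ℂ] K) (T : E →L[ℂ] E)
    (hT : IsTensorOp tmul A B T) :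
    nrad T = (1 / 2) * (‖A‖ * ‖B‖) ↔
      ∀ θ : ℝ,
        ‖Complex.exp (θ * Complex.I) • T +
            Complex.exp (-(θ * Complex.I)) • ContinuousLinearMap.adjoint T‖ = ‖A‖ * ‖B‖ ∧
        ‖Complex.exp (θ * Complex.I) • T -
            Complex.exp (-(θ * Complex.I)) • ContinuousLinearMap.adjoint T‖ = ‖A‖ * ‖B‖ :=
  stmt9_general tmul htmul A B T hT
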